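/- arXiv:1301.5048 — 7 statements merged into one kernel-verified Lean document; each statement's English description precedes it below -/
import Mathlib

section
/- The rational function f(x,y,z) = z²·(x²+y²z²−y³)/(x²+y²z²+y⁴) on ℝ³ extends to a continuous function f^c on all of ℝ³ with f^c(0,0,z) = z². -/
/-! Writing `D = x² + y²z² + y⁴`, the function equals `z² - y(1 + y) · y²z²/D` off the `z`-axis.
The fraction `y²z²/D` lies in `[0, 1]` and is continuous wherever `y ≠ 0`, while the factor
`y(1 + y)` vanishes on the plane `y = 0`, so the product extends continuously by `0` there. -/

open Filter Topology

theorem continuous_mul_of_norm_le_of_continuousAt {X α : Type*} [TopologicalSpace X]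
    [NonUnitalSeminormedRing α] {c q : X → α} {C : ℝ} (hc : Continuous c) (hq : ∀ x, ‖q x‖ ≤ C)
    (hqc : ∀ x, c x ≠ 0 → ContinuousAt q x) : Continuous fun x => c x * q x := by
  rw [continuous_iff_continuousAt]
  intro x
  by_cases hx : c x = 0
  · have hc0 : Tendsto c (𝓝 x) (𝓝 0) := hx ▸ hc.continuousAt
    have hqb : IsBoundedUnder (· ≤ ·) (𝓝 x) ((‖·‖) ∘ q) := ⟨C, eventually_map.2 (.of_forall hq)⟩
    simpa [ContinuousAt, hx] using hc0.zero_mul_isBoundedUnder_le hqb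
  · exact hc.continuousAt.mul (hqc x hx)

lemma sq_add_sq_mul_sq_add_pow_four_pos {x y : ℝ} (h : ¬(x = 0 ∧ y = 0)) (z : ℝ) :
    0 < x ^ 2 + y ^ 2 * z ^ 2 + y ^ 4 := by
  rcases not_and_or.mp h with hx | hy
  · have : 0 < x ^ 2 := by positivity
    positivity
  · have : 0 < y ^ 4 := by positivity
    positivity

noncomputable def axisRatio (p : ℝ × ℝ × ℝ) : ℝ :=
  p.2.1 ^ 2 * p.2.2 ^ 2 / (p.1 ^ 2 + p.2.1 ^ 2 * p.2.2 ^ 2 + p.2.1 ^ 4)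

lemma norm_axisRatio_le_one (p : ℝ × ℝ × ℝ) : ‖axisRatio p‖ ≤ 1 := by
  rw [Real.norm_of_nonneg (by unfold axisRatio; positivity)]
  exact div_le_one_of_le₀ (by nlinarith [sq_nonneg p.1, sq_nonneg (p.2.1 ^ 2)]) (by positivity)

lemma continuousAt_axisRatio {p : ℝ × ℝ × ℝ} (hp : ¬(p.1 = 0 ∧ p.2.1 = 0)) :
    ContinuousAt axisRatio p :=
  ContinuousAt.div (by fun_prop) (by fun_prop) (sq_add_sq_mul_sq_add_pow_four_pos hp p.2.2).ne'

lemma continuous_mul_axisRatio :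
    Continuous fun p : ℝ × ℝ × ℝ => p.2.1 * (1 + p.2.1) * axisRatio p :=
  continuous_mul_of_norm_le_of_continuousAt (by fun_prop) norm_axisRatio_le_one
    fun _ hp => continuousAt_axisRatio fun h => hp (by simp [h.2])

theorem stmt5 : ∃ f : ℝ × ℝ × ℝ → ℝ, Continuous f ∧
    (∀ x y z : ℝ, ¬ (x = 0 ∧ y = 0) →
      f (x, y, z) =
        z ^ 2 * (x ^ 2 + y ^ 2 * z ^ 2 - y ^ 3) / (x ^ 2 + y ^ 2 * z ^ 2 + y ^ 4)) ∧
    ∀ z : ℝ, f (0, 0, z) = z ^ 2 := by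
  refine ⟨fun p => p.2.2 ^ 2 - p.2.1 * (1 + p.2.1) * axisRatio p,
    (continuous_snd.comp continuous_snd).pow 2 |>.sub continuous_mul_axisRatio, ?_, ?_⟩
  · intro x y z h
    have hD := (sq_add_sq_mul_sq_add_pow_four_pos h z).ne'
    rw [eq_div_iff hD, sub_mul, axisRatio, mul_assoc _ (_ / _), div_mul_cancel₀ _ hD]
    ring
  · simp
end

section
/- The continuous extension f^c of f(x,y,z) = z²·(x²+y²z²−y³)/(x²+y²z²+y⁴) vanishes at every smooth point of the surface S = {x²+y²z²−y³ = 0}, i.e. f^c vanishes on the Euclidean closure of {(x,y,z) ∈ S : y ≠ 0}, but f^c(0,0,z) = z² ≠ 0 for z ≠ 0. -/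
/-! On the part of `S` with `y ≠ 0` the numerator of `f` vanishes, so `f = 0` there and, by
continuity, on its closure. On the line `y = 0` the quotient is `z² x² / x² = z²` for `x ≠ 0`,
and letting `x → 0` gives `f (0, 0, z) = z²`. -/

theorem stmt7 (f : ℝ × ℝ × ℝ → ℝ) (hf : Continuous f)
    (hfe : ∀ x y z : ℝ, ¬ (x = 0 ∧ y = 0) →
      f (x, y, z) =
        z ^ 2 * (x ^ 2 + y ^ 2 * z ^ 2 - y ^ 3) / (x ^ 2 + y ^ 2 * z ^ 2 + y ^ 4)) :
    (∀ p ∈ closure {p : ℝ × ℝ × ℝ |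
        p.1 ^ 2 + p.2.1 ^ 2 * p.2.2 ^ 2 - p.2.1 ^ 3 = 0 ∧ p.2.1 ≠ 0}, f p = 0) ∧
    ∀ z : ℝ, z ≠ 0 → f (0, 0, z) ≠ 0 := by
  have h_smooth : Set.EqOn f 0
      {p : ℝ × ℝ × ℝ | p.1 ^ 2 + p.2.1 ^ 2 * p.2.2 ^ 2 - p.2.1 ^ 3 = 0 ∧ p.2.1 ≠ 0} := by
    rintro ⟨x, y, z⟩ ⟨hS, hy⟩
    rw [hfe x y z fun h => hy h.2, hS, mul_zero, zero_div, Pi.zero_apply]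
  refine ⟨fun p hp => h_smooth.closure hf continuous_const hp, fun z hz => ?_⟩
  have h_axis : (fun x : ℝ => f (x, 0, z)) = fun _ => z ^ 2 := by
    refine Continuous.ext_on (dense_compl_singleton 0) (by fun_prop) continuous_const ?_
    intro x (hx : x ≠ 0)
    change f (x, 0, z) = z ^ 2
    rw [hfe x 0 z fun h => hx h.1]
    norm_num [hx]
  rw [congrFun h_axis 0]
  positivity
end

section
/- The pair y₁ = (1+x₃²)^{1/3}, y₂ = x₁³/(x₁² + (1+x₃²)^{1/3}x₁x₂ + (1+x₃²)^{2/3}x₂²) is a continuous (semialgebraic) solution on ℝ³ of the linear equation x₁³x₂·y₁ + (x₁³ − (1+x₃²)x₂³)·y₂ = x₁⁴, with y₂ extended by 0 where x₁ = x₂ = 0; moreover |y₂| ≤ 2|x₁| everywhere. -/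
/-!
Write `c = (1 + x₃²)^{1/3}` and `D = x₁² + c x₁ x₂ + c² x₂²`, so that `x₁³ − c³ x₂³ = (x₁ − c x₂) D`.
Away from `x₁ = x₂ = 0` the equation then reduces to `x₁³ x₂ c + x₁³ (x₁ − c x₂) = x₁⁴`.
Since `c ≥ 1`, `D ≥ (x₁² + x₂²)/2 ≥ x₁²/2`, which gives `|x₁³ / D| ≤ 2|x₁|`; this bound tends to `0`
at the zeros of `D`, so the quotient extended by `0` is continuous.
-/

open Filter Topology

theorem Continuous.div_of_abs_le {X : Type*} [TopologicalSpace X] {f g h : X → ℝ}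
    (hf : Continuous f) (hg : Continuous g) (hh : Continuous h)
    (hbound : ∀ x, |f x / g x| ≤ h x) (hzero : ∀ x, g x = 0 → h x = 0) :
    Continuous fun x => f x / g x := by
  refine continuous_iff_continuousAt.2 fun x => ?_
  by_cases hgx : g x = 0
  · have hhx : Tendsto h (𝓝 x) (𝓝 0) := hzero x hgx ▸ hh.continuousAt
    simpa [ContinuousAt, hgx] using squeeze_zero_norm hbound hhx
  · exact hf.continuousAt.div hg.continuousAt hgx

lemma abs_pow_three_div_le {a q : ℝ} (hq : a ^ 2 / 2 ≤ q) : |a ^ 3 / q| ≤ 2 * |a| := by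
  rcases (le_trans (by positivity) hq).eq_or_lt with hq0 | hq0
  · simp [← hq0]
  · rw [abs_div, abs_of_pos hq0, div_le_iff₀ hq0, abs_pow, pow_succ, sq_abs]
    nlinarith [abs_nonneg a]

lemma half_sq_add_sq_le {a b c : ℝ} (hc : 1 ≤ c ^ 2) :
    (a ^ 2 + b ^ 2) / 2 ≤ a ^ 2 + c * a * b + c ^ 2 * b ^ 2 := by
  nlinarith [sq_nonneg (a + c * b), mul_nonneg (sub_nonneg.2 hc) (sq_nonneg b)]

lemma mul_add_sub_mul_div_eq {a b c t : ℝ} (hct : c ^ 3 = t) (hc : 1 ≤ c ^ 2) :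
    a ^ 3 * b * c + (a ^ 3 - t * b ^ 3) * (a ^ 3 / (a ^ 2 + c * a * b + c ^ 2 * b ^ 2)) =
      a ^ 4 := by
  set q := a ^ 2 + c * a * b + c ^ 2 * b ^ 2
  by_cases hq : q = 0
  · have ha : a = 0 := by nlinarith [half_sq_add_sq_le (a := a) (b := b) hc, sq_nonneg b]
    simp [ha]
  · have hfactor : a ^ 3 - t * b ^ 3 = (a - c * b) * q := by rw [← hct]; ring
    rw [hfactor, mul_assoc (a - c * b), mul_div_cancel₀ _ hq]
    ring

lemma rpow_one_third_pow_three {t : ℝ} (ht : 0 ≤ t) : (t ^ (1 / 3 : ℝ)) ^ 3 = t := by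
  rw [← Real.rpow_mul_natCast ht]
  norm_num

lemma rpow_two_thirds_eq_sq {t : ℝ} (ht : 0 ≤ t) : t ^ (2 / 3 : ℝ) = (t ^ (1 / 3 : ℝ)) ^ 2 := by
  rw [← Real.rpow_mul_natCast ht]
  norm_num

lemma one_le_one_add_sq_rpow_one_third_sq (x : ℝ) : 1 ≤ ((1 + x ^ 2) ^ (1 / 3 : ℝ)) ^ 2 :=
  one_le_pow₀ (Real.one_le_rpow (by nlinarith [sq_nonneg x]) (by norm_num))

noncomputable def solutionDenom (p : ℝ × ℝ × ℝ) : ℝ :=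
  p.1 ^ 2 + (1 + p.2.2 ^ 2) ^ ((1 : ℝ) / 3) * p.1 * p.2.1 +
    (1 + p.2.2 ^ 2) ^ ((2 : ℝ) / 3) * p.2.1 ^ 2

lemma solutionDenom_eq (p : ℝ × ℝ × ℝ) :
    solutionDenom p = p.1 ^ 2 + (1 + p.2.2 ^ 2) ^ ((1 : ℝ) / 3) * p.1 * p.2.1 +
      ((1 + p.2.2 ^ 2) ^ ((1 : ℝ) / 3)) ^ 2 * p.2.1 ^ 2 := by
  rw [solutionDenom, rpow_two_thirds_eq_sq (by positivity)]

lemma half_sq_fst_le_solutionDenom (p : ℝ × ℝ × ℝ) : p.1 ^ 2 / 2 ≤ solutionDenom p := by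
  have h := half_sq_add_sq_le (a := p.1) (b := p.2.1) (one_le_one_add_sq_rpow_one_third_sq p.2.2)
  rw [solutionDenom_eq]
  nlinarith [sq_nonneg p.2.1]

lemma continuous_solutionDenom : Continuous solutionDenom := by
  unfold solutionDenom
  fun_prop (disch := norm_num)

noncomputable def solution (p : ℝ × ℝ × ℝ) : ℝ := p.1 ^ 3 / solutionDenom p

lemma abs_solution_le (p : ℝ × ℝ × ℝ) : |solution p| ≤ 2 * |p.1| :=
  abs_pow_three_div_le (half_sq_fst_le_solutionDenom p)

lemma continuous_solution : Continuous solution := by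
  refine (continuous_fst.pow 3).div_of_abs_le continuous_solutionDenom
    (continuous_const.mul continuous_fst.abs) abs_solution_le fun p hp => ?_
  have hp₁ : p.1 = 0 := by nlinarith [half_sq_fst_le_solutionDenom p, sq_nonneg p.1]
  simp [hp₁]

theorem stmt9 : ∃ y₂ : ℝ × ℝ × ℝ → ℝ, Continuous y₂ ∧
    (∀ x₁ x₂ x₃ : ℝ, ¬ (x₁ = 0 ∧ x₂ = 0) →
      y₂ (x₁, x₂, x₃) = x₁ ^ 3 /
        (x₁ ^ 2 + (1 + x₃ ^ 2) ^ ((1 : ℝ) / 3) * x₁ * x₂ +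
          (1 + x₃ ^ 2) ^ ((2 : ℝ) / 3) * x₂ ^ 2)) ∧
    (∀ x₃ : ℝ, y₂ (0, 0, x₃) = 0) ∧
    (∀ x₁ x₂ x₃ : ℝ,
      x₁ ^ 3 * x₂ * (1 + x₃ ^ 2) ^ ((1 : ℝ) / 3) +
        (x₁ ^ 3 - (1 + x₃ ^ 2) * x₂ ^ 3) * y₂ (x₁, x₂, x₃) = x₁ ^ 4) ∧
    ∀ x₁ x₂ x₃ : ℝ, |y₂ (x₁, x₂, x₃)| ≤ 2 * |x₁| := by
  refine ⟨solution, continuous_solution, fun _ _ _ _ => rfl, fun _ => by simp [solution],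
    fun x₁ x₂ x₃ => ?_, fun x₁ x₂ x₃ => abs_solution_le (x₁, x₂, x₃)⟩
  rw [solution, solutionDenom_eq]
  exact mul_add_sub_mul_div_eq (rpow_one_third_pow_three (by positivity))
    (one_le_one_add_sq_rpow_one_third_sq x₃)
end

section
/- If (y₁, y₂) are rational functions on ℝ³ satisfying x₁³x₂·y₁ + (x₁³ − (1+x₃²)x₂³)·y₂ = x₁⁴ wherever defined, and y₁ extends to a continuous function on ℝ³, then the restriction of y₁ to the set S = {x₁ = (1+x₃²)^{1/3}x₂} satisfies y₁ = x₁/x₂ = (1+x₃²)^{1/3} on S ∖ {x₂ = 0}; in particular y₁(0,0,t) = (1+t²)^{1/3}, which is not a rational function of t, a contradiction — hence the equation has no continuous rational solution. -/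
/-!
On the surface `x 0 ^ 3 = (1 + x 2 ^ 2) * x 1 ^ 3` the coefficient of `y₂` vanishes, so the
equation forces `y₁ = x 0 / x 1 = (1 + x 2 ^ 2) ^ (1/3)` there away from `x 1 = 0`, and by
continuity `y₁ ![0, 0, t] ^ 3 = 1 + t ^ 2`.

On the other hand, a continuous `y` agreeing with `p / q` off `{q = 0}` satisfies `y * q = p`
everywhere. Restrict this identity to a plane through the axis `{x 0 = x 1 = 0}` on which `q` does
not vanish identically, and cancel the powers of the transverse coordinate `s` dividing `q`
(continuity of `y` in `s` lets one divide by `s` and pass to `s = 0`). At `s = 0` this gives a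
nonzero polynomial `Q₀` with `y ![0, 0, t] * Q₀ t = P₀ t`; cubing, `(1 + t²) Q₀³ = P₀³`, which is
impossible since the two sides have degrees `2` and `0` mod `3`.
-/

open MvPolynomial

theorem MvPolynomial.dense_setOf_eval_ne_zero {σ : Type*} [Fintype σ] {q : MvPolynomial σ ℝ}
    (hq : q ≠ 0) : Dense {x : σ → ℝ | eval x q ≠ 0} := by
  refine dense_iff_inter_open.mpr fun U hU ⟨z, hz⟩ => ?_
  by_contra! hU_zero
  have hvanish : (eval · q) =ᶠ[nhds z] 0 := by
    filter_upwards [hU.mem_nhds hz] with x hx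
    by_contra hne
    exact hU_zero.subset ⟨hx, hne⟩
  refine hq (MvPolynomial.funext fun x => ?_)
  simpa using (AnalyticOnNhd.eval_mvPolynomial q).eqOn_zero_of_preconnected_of_eventuallyEq_zero
    isPreconnected_univ (Set.mem_univ z) hvanish (Set.mem_univ x)

theorem MvPolynomial.mul_eval_eq_of_continuous {σ : Type*} [Fintype σ] {p q : MvPolynomial σ ℝ}
    {y : (σ → ℝ) → ℝ} (hy : Continuous y) (hq : q ≠ 0)
    (h : ∀ x, eval x q ≠ 0 → y x = eval x p / eval x q) (x : σ → ℝ) :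
    y x * eval x q = eval x p :=
  congrFun (Continuous.ext_on (dense_setOf_eval_ne_zero hq) (hy.mul (continuous_eval q))
    (continuous_eval p) fun x hx => by
    rw [Pi.mul_apply, h x hx, div_mul_cancel₀ _ hx]) x

namespace Polynomial

theorem evalEval_aeval {R σ : Type*} [CommSemiring R] (x y : R) (g : σ → R[X][X])
    (q : MvPolynomial σ R) :
    (MvPolynomial.aeval g q).evalEval x y = MvPolynomial.eval (fun i => (g i).evalEval x y) q := by
  rw [← coe_aevalAeval_eq_evalEval, ← AlgHom.comp_apply, MvPolynomial.comp_aeval]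
  rfl

theorem continuous_evalEval_right (x : ℝ) (Q : ℝ[X][X]) : Continuous (Q.evalEval x) := by
  simp only [← map_evalRingHom_eval]
  exact (Q.map (evalRingHom x)).continuous

theorem evalEval_zero_right {R : Type*} [CommSemiring R] (x : R) (Q : R[X][X]) :
    Q.evalEval x 0 = (Q.coeff 0).eval x := by
  rw [evalEval, C_0, ← coeff_zero_eq_eval_zero]

variable {f : ℝ → ℝ → ℝ}

theorem exists_mul_evalEval_eq_of_X_mul (hf : ∀ x, Continuous (f x)) {Q P : ℝ[X][X]}
    (h : ∀ x y, f x y * (X * Q).evalEval x y = P.evalEval x y) :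
    ∃ P' : ℝ[X][X], ∀ x y, f x y * Q.evalEval x y = P'.evalEval x y := by
  have hP : P.coeff 0 = 0 := Polynomial.funext fun x => by
    simpa [evalEval_zero_right] using (h x 0).symm
  obtain ⟨P', rfl⟩ := X_dvd_iff.mpr hP
  refine ⟨P', fun x => congrFun (Continuous.ext_on (dense_compl_singleton 0)
    ((hf x).mul (continuous_evalEval_right x Q)) (continuous_evalEval_right x P') fun y hy => ?_)⟩
  refine mul_left_cancel₀ (hy : y ≠ 0) ?_
  simpa [evalEval_mul, mul_left_comm] using h x y

theorem exists_mul_evalEval_eq_of_X_pow_mul (hf : ∀ x, Continuous (f x)) {Q P : ℝ[X][X]}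
    (k : ℕ) (h : ∀ x y, f x y * (X ^ k * Q).evalEval x y = P.evalEval x y) :
    ∃ P' : ℝ[X][X], ∀ x y, f x y * Q.evalEval x y = P'.evalEval x y := by
  induction k generalizing P with
  | zero => exact ⟨P, by simpa using h⟩
  | succ k ih =>
    rw [pow_succ', mul_assoc] at h
    obtain ⟨P', hP'⟩ := exists_mul_evalEval_eq_of_X_mul hf h
    exact ih hP'

theorem exists_mul_eval_eq_of_mul_evalEval_eq (hf : ∀ x, Continuous (f x)) {Q P : ℝ[X][X]}
    (hQ : Q ≠ 0) (h : ∀ x y, f x y * Q.evalEval x y = P.evalEval x y) :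
    ∃ Q₀ P₀ : ℝ[X], Q₀ ≠ 0 ∧ ∀ x, f x 0 * Q₀.eval x = P₀.eval x := by
  obtain ⟨Q', hQQ', hQ'⟩ := exists_eq_pow_rootMultiplicity_mul_and_not_dvd Q hQ 0
  rw [C_0, sub_zero] at hQQ' hQ'
  rw [hQQ'] at h
  obtain ⟨P', hP'⟩ := exists_mul_evalEval_eq_of_X_pow_mul hf _ h
  refine ⟨Q'.coeff 0, P'.coeff 0, fun h0 => hQ' (X_dvd_iff.mpr h0), fun x => ?_⟩
  simpa [evalEval_zero_right] using hP' x 0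

end Polynomial

open Polynomial in
theorem exists_mul_eval_eq_on_axis {p q : MvPolynomial (Fin 3) ℝ} {y : (Fin 3 → ℝ) → ℝ}
    (hy : Continuous y) (hq : q ≠ 0) (h : ∀ x, y x * eval x q = eval x p) :
    ∃ Q₀ P₀ : ℝ[X], Q₀ ≠ 0 ∧ ∀ t, y ![0, 0, t] * Q₀.eval t = P₀.eval t := by
  obtain ⟨z, hz⟩ := (dense_setOf_eval_ne_zero hq).nonempty
  let g : Fin 3 → ℝ[X][X] := ![CC (z 0) * Polynomial.X, CC (z 1) * Polynomial.X, C Polynomial.X]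
  have hg : ∀ t s, (fun i => (g i).evalEval t s) = ![z 0 * s, z 1 * s, t] := fun t s => by
    ext i; fin_cases i <;> simp [g, evalEval_C]
  have hQ : MvPolynomial.aeval g q ≠ 0 := fun h0 => hz <| by
    have := congrArg (evalEval (z 2) 1) h0
    rwa [evalEval_aeval, hg, evalEval_zero, mul_one, mul_one,
      show ![z 0, z 1, z 2] = z from by ext i; fin_cases i <;> rfl] at this
  obtain ⟨Q₀, P₀, hQ₀, hQP₀⟩ := exists_mul_eval_eq_of_mul_evalEval_eq
    (f := fun t s => y ![z 0 * s, z 1 * s, t]) (P := MvPolynomial.aeval g p)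
    (fun t => hy.comp (by fun_prop)) hQ
    fun t s => by simpa only [evalEval_aeval, hg] using h _
  exact ⟨Q₀, P₀, hQ₀, fun t => by simpa using hQP₀ t⟩

theorem apply_axis_pow_three {y₁ y₂ : (Fin 3 → ℝ) → ℝ} (hy₁ : Continuous y₁)
    (h : ∀ x : Fin 3 → ℝ,
      (x 0) ^ 3 * x 1 * y₁ x + ((x 0) ^ 3 - (1 + (x 2) ^ 2) * (x 1) ^ 3) * y₂ x = (x 0) ^ 4)
    (t : ℝ) : y₁ ![0, 0, t] ^ 3 = 1 + t ^ 2 := by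
  set c := (1 + t ^ 2) ^ ((3 : ℕ)⁻¹ : ℝ)
  have hc : c ^ 3 = 1 + t ^ 2 := Real.rpow_inv_natCast_pow (by positivity) three_ne_zero
  -- the point `![c * u, u, t]` lies on `S`, where the equation reads `x 0 ^ 3 * x 1 * y₁ x = x 0 ^ 4`
  have hS : ∀ u : ℝ, u ≠ 0 → y₁ ![c * u, u, t] = c := fun u hu => by
    have hu : (1 + t ^ 2) * u ^ 4 ≠ 0 := by positivity
    refine mul_left_cancel₀ hu ?_
    have := h ![c * u, u, t]
    simp only [Matrix.cons_val_zero, Matrix.cons_val_one, Matrix.cons_val_two, Matrix.head_cons,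
      Matrix.tail_cons] at this
    linear_combination
      this + (u ^ 4 * c - u ^ 4 * y₁ ![c * u, u, t] - u ^ 3 * y₂ ![c * u, u, t]) * hc
  have h0 := congrFun (Continuous.ext_on (dense_compl_singleton (0 : ℝ))
    (hy₁.comp (by fun_prop : Continuous fun u : ℝ => ![c * u, u, t])) continuous_const hS) 0
  simp only [Function.comp_apply, mul_zero] at h0
  rw [h0, hc]

open Polynomial in
theorem eq_zero_of_cube_eq_one_add_sq {g : ℝ → ℝ} (hg : ∀ t, g t ^ 3 = 1 + t ^ 2) {Q P : ℝ[X]}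
    (h : ∀ t, g t * Q.eval t = P.eval t) : Q = 0 := by
  by_contra hQ
  have hcube : (1 + Polynomial.X ^ 2 : ℝ[X]) * Q ^ 3 = P ^ 3 := Polynomial.funext fun t => by
    simp [← h t, mul_pow, hg]
  have hdeg : (1 + Polynomial.X ^ 2 : ℝ[X]).natDegree = 2 := by compute_degree!
  have hne : (1 + Polynomial.X ^ 2 : ℝ[X]) ≠ 0 := ne_zero_of_natDegree_gt (n := 0) (by omega)
  have := congrArg natDegree hcube
  rw [natDegree_mul hne (pow_ne_zero 3 hQ), natDegree_pow, natDegree_pow, hdeg] at this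
  omega

theorem stmt10 : ¬ ∃ (p₁ q₁ p₂ q₂ : MvPolynomial (Fin 3) ℝ)
    (y₁ y₂ : (Fin 3 → ℝ) → ℝ),
    Continuous y₁ ∧ Continuous y₂ ∧ q₁ ≠ 0 ∧ q₂ ≠ 0 ∧
    (∀ x : Fin 3 → ℝ, eval x q₁ ≠ 0 → y₁ x = eval x p₁ / eval x q₁) ∧
    (∀ x : Fin 3 → ℝ, eval x q₂ ≠ 0 → y₂ x = eval x p₂ / eval x q₂) ∧
    ∀ x : Fin 3 → ℝ,
      (x 0) ^ 3 * x 1 * y₁ x + ((x 0) ^ 3 - (1 + (x 2) ^ 2) * (x 1) ^ 3) * y₂ x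
        = (x 0) ^ 4 := by
  rintro ⟨p₁, q₁, -, -, y₁, y₂, hy₁, -, hq₁, -, hy₁_rat, -, heq⟩
  obtain ⟨Q, P, hQ, hQP⟩ :=
    exists_mul_eval_eq_on_axis hy₁ hq₁ (mul_eval_eq_of_continuous hy₁ hq₁ hy₁_rat)
  exact hQ (eq_zero_of_cube_eq_one_add_sq (apply_axis_pow_three hy₁ heq) hQP)
end

section
/- A continuous function h on a real algebraic variety X is hereditarily rational if and only if there exists a chain of closed subvarieties ∅ = X₋₁ ⊂ X₀ ⊂ ⋯ ⊂ X_m = X such that for each i = 0,...,m the restriction of h to X_i ∖ X_{i−1} is a regular function. -/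
open MvPolynomial

/-- A real algebraic subset of `ℝⁿ`: the common zero set of a family of polynomials. -/
def IsAlgSet {n : ℕ} (V : Set (Fin n → ℝ)) : Prop :=
  ∃ S : Set (MvPolynomial (Fin n) ℝ), V = {x | ∀ p ∈ S, eval x p = 0}

/-- An irreducible real algebraic subset. -/
def IsIrredAlgSet {n : ℕ} (Z : Set (Fin n → ℝ)) : Prop :=
  IsAlgSet Z ∧ Z.Nonempty ∧
    ∀ Z₁ Z₂ : Set (Fin n → ℝ), IsAlgSet Z₁ → IsAlgSet Z₂ → Z = Z₁ ∪ Z₂ → Z = Z₁ ∨ Z = Z₂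

/-- `h` is regular on `A`: at each point it is a quotient of polynomials with
nonvanishing denominator. -/
def RegularOn {n : ℕ} (h : (Fin n → ℝ) → ℝ) (A : Set (Fin n → ℝ)) : Prop :=
  ∀ x ∈ A, ∃ p q : MvPolynomial (Fin n) ℝ, eval x q ≠ 0 ∧
    ∀ y ∈ A, eval y q ≠ 0 → h y = eval y p / eval y q

/-- `A` is Zariski dense in `Z`. -/
def ZariskiDenseIn {n : ℕ} (A Z : Set (Fin n → ℝ)) : Prop :=
  ∀ W : Set (Fin n → ℝ), IsAlgSet W → A ⊆ W → Z ⊆ W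

/-- `h` is hereditarily rational on `X`: every irreducible real subvariety `Z ⊆ X`
has a Zariski dense (Zariski) open subset on which `h` is regular. -/
def HereditarilyRational {n : ℕ} (X : Set (Fin n → ℝ)) (h : (Fin n → ℝ) → ℝ) : Prop :=
  ∀ Z ⊆ X, IsIrredAlgSet Z →
    ∃ Z' : Set (Fin n → ℝ), IsAlgSet Z' ∧ ZariskiDenseIn (Z \ Z') Z ∧ RegularOn h (Z \ Z')

/-!
Both directions are Noetherian inductions on algebraic sets; the descending chain condition comes
from the ascending chain condition on ideals of `ℝ[x₁, …, xₙ]` via vanishing ideals.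

Given a filtration, an irreducible `Z` with `Z ⊆ F (i + 1)` but `Z ⊄ F i` meets the stratum
`F (i + 1) \ F i` in `Z \ F i`, which is Zariski dense in `Z` by irreducibility. Conversely, for
hereditarily rational `h` every nonempty algebraic `Y` contains a proper algebraic `B` with `h`
regular on `Y \ B`; induction on `B` then produces the filtration of `Y`.
-/

open Set

section

variable {n : ℕ}

namespace IsAlgSet

theorem empty : IsAlgSet (∅ : Set (Fin n → ℝ)) :=
  ⟨{1}, by simp⟩

theorem inter {V W : Set (Fin n → ℝ)} (hV : IsAlgSet V) (hW : IsAlgSet W) :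
    IsAlgSet (V ∩ W) := by
  obtain ⟨S, rfl⟩ := hV
  obtain ⟨T, rfl⟩ := hW
  exact ⟨S ∪ T, by ext x; simp [or_imp, forall_and]⟩

open Pointwise in
theorem union {V W : Set (Fin n → ℝ)} (hV : IsAlgSet V) (hW : IsAlgSet W) :
    IsAlgSet (V ∪ W) := by
  obtain ⟨S, rfl⟩ := hV
  obtain ⟨T, rfl⟩ := hW
  refine ⟨S * T, Set.ext fun x => ⟨?_, fun hx => ?_⟩⟩
  · rintro (hx | hx) _ ⟨p, hp, q, hq, rfl⟩
    · simp [hx p hp]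
    · simp [hx q hq]
  · by_contra! hne
    simp only [mem_union, mem_ofPred_eq, not_or, not_forall] at hne
    obtain ⟨⟨p, hp, hpx⟩, ⟨q, hq, hqx⟩⟩ := hne
    exact mul_ne_zero hpx hqx (by simpa using hx _ (Set.mul_mem_mul hp hq))

theorem vanishingIdeal_lt {A B : Set (Fin n → ℝ)} (hA : IsAlgSet A) (hAB : A ⊂ B) :
    vanishingIdeal ℝ B < vanishingIdeal ℝ A := by
  refine (vanishingIdeal_anti_mono hAB.subset).lt_of_not_ge fun hle => ?_
  obtain ⟨S, rfl⟩ := hA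
  obtain ⟨x, hxB, hxA⟩ := exists_of_ssubset hAB
  simp only [mem_ofPred_eq, not_forall] at hxA
  obtain ⟨p, hp, hpx⟩ := hxA
  exact hpx (hle (fun y hy => hy p hp) x hxB)

@[elab_as_elim]
theorem induction {P : (Y : Set (Fin n → ℝ)) → IsAlgSet Y → Prop}
    (ind : ∀ Y hY, (∀ Y' hY', Y' ⊂ Y → P Y' hY') → P Y hY)
    {Y : Set (Fin n → ℝ)} (hY : IsAlgSet Y) : P Y hY := by
  refine (InvImage.wf (vanishingIdeal ℝ) wellFounded_gt).induction
    (C := fun Y => ∀ hY, P Y hY) Y (fun Y ih hY => ind Y hY fun Y' hY' hY'Y => ?_) hY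
  exact ih Y' (vanishingIdeal_lt hY' hY'Y) hY'

end IsAlgSet

namespace IsIrredAlgSet

variable {Z A B : Set (Fin n → ℝ)}

theorem subset_or_subset_of_subset_union (hZ : IsIrredAlgSet Z) (hA : IsAlgSet A)
    (hB : IsAlgSet B) (h : Z ⊆ A ∪ B) : Z ⊆ A ∨ Z ⊆ B := by
  have hZ_eq : Z = Z ∩ A ∪ Z ∩ B := by rw [← inter_union_distrib_left, inter_eq_left.mpr h]
  refine (hZ.2.2 _ _ (hZ.1.inter hA) (hZ.1.inter hB) hZ_eq).imp ?_ ?_ <;>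
    exact fun he => he ▸ inter_subset_right

theorem zariskiDenseIn_diff_iff (hZ : IsIrredAlgSet Z) (hA : IsAlgSet A) :
    ZariskiDenseIn (Z \ A) Z ↔ ¬ Z ⊆ A := by
  refine ⟨fun hdense hZA => ?_, fun hZA W hW hsub => ?_⟩
  · have := hdense ∅ IsAlgSet.empty (sdiff_eq_empty.mpr hZA).subset
    exact hZ.2.1.ne_empty (subset_empty_iff.mp this)
  · exact (hZ.subset_or_subset_of_subset_union hW hA (sdiff_subset_iff.mp hsub |>.trans
      (union_comm _ _).subset)).resolve_right hZA

end IsIrredAlgSet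

variable {h : (Fin n → ℝ) → ℝ}

theorem RegularOn.mono {A B : Set (Fin n → ℝ)} (hA : RegularOn h A) (hBA : B ⊆ A) :
    RegularOn h B := fun x hx =>
  let ⟨p, q, hqx, hpq⟩ := hA x (hBA hx)
  ⟨p, q, hqx, fun y hy => hpq y (hBA hy)⟩

def HasRegularFiltration (X : Set (Fin n → ℝ)) (h : (Fin n → ℝ) → ℝ) : Prop :=
  ∃ (m : ℕ) (F : ℕ → Set (Fin n → ℝ)), F 0 = ∅ ∧ F (m + 1) = X ∧
    (∀ i ≤ m, IsAlgSet (F (i + 1)) ∧ F i ⊆ F (i + 1)) ∧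
    ∀ i ≤ m, RegularOn h (F (i + 1) \ F i)

theorem hasRegularFiltration_empty : HasRegularFiltration ∅ h :=
  ⟨0, fun _ => ∅, rfl, rfl, fun _ _ => ⟨IsAlgSet.empty, subset_rfl⟩,
    fun _ _ x hx => absurd hx.1 (notMem_empty x)⟩

theorem HasRegularFiltration.extend {B Y : Set (Fin n → ℝ)} (hB : HasRegularFiltration B h)
    (hY : IsAlgSet Y) (hBY : B ⊆ Y) (hreg : RegularOn h (Y \ B)) :
    HasRegularFiltration Y h := by
  obtain ⟨m, F, hF0, hFm, hFalg, hFreg⟩ := hB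
  refine ⟨m + 1, Function.update F (m + 2) Y, ?_, by simp, fun i hi => ?_, fun i hi => ?_⟩
  · simp [Function.update_of_ne, hF0]
  · rcases hi.lt_or_eq with hi | rfl
    · rw [Function.update_of_ne (by omega), Function.update_of_ne (by omega)]
      exact hFalg i (by omega)
    · rw [Function.update_self, Function.update_of_ne (by omega), hFm]
      exact ⟨hY, hBY⟩
  · rcases hi.lt_or_eq with hi | rfl
    · rw [Function.update_of_ne (by omega), Function.update_of_ne (by omega)]
      exact hFreg i (by omega)
    · rw [Function.update_self, Function.update_of_ne (by omega), hFm]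
      exact hreg

theorem hereditarilyRational_empty : HereditarilyRational ∅ h :=
  fun _ hZ hirr => absurd (subset_empty_iff.mp hZ) hirr.2.1.ne_empty

namespace HereditarilyRational

theorem mono {X Y : Set (Fin n → ℝ)} (hX : HereditarilyRational X h) (hYX : Y ⊆ X) :
    HereditarilyRational Y h := fun Z hZY => hX Z (hZY.trans hYX)

theorem of_regularOn_diff {A Y : Set (Fin n → ℝ)} (hA : HereditarilyRational A h)
    (hA_alg : IsAlgSet A) (hreg : RegularOn h (Y \ A)) : HereditarilyRational Y h := by
  intro Z hZY hZ
  by_cases hZA : Z ⊆ A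
  · exact hA Z hZA hZ
  · exact ⟨A, hA_alg, (hZ.zariskiDenseIn_diff_iff hA_alg).mpr hZA,
      hreg.mono (sdiff_subset_sdiff_left hZY)⟩

/-- The auxiliary `W ⊆ B` makes the induction work: if `Y = Y₁ ∪ Y₂` with both parts proper, one
recurses into `Y₁` with `W ∪ Y₂` (or, when `Y₁ ⊆ W ∪ Y₂`, into `Y₂` with `W`), so that `Y \ B`
lies in the part recursed into. -/
theorem exists_regularOn_diff {Y W : Set (Fin n → ℝ)} (hY : IsAlgSet Y)
    (hHR : HereditarilyRational Y h) (hW : IsAlgSet W) (hYW : ¬ Y ⊆ W) :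
    ∃ B, IsAlgSet B ∧ W ⊆ B ∧ ¬ Y ⊆ B ∧ RegularOn h (Y \ B) := by
  induction hY using IsAlgSet.induction generalizing W with
  | ind Y hY ih => ?_
  by_cases hirr : IsIrredAlgSet Y
  · obtain ⟨Z', hZ', hdense, hreg⟩ := hHR Y subset_rfl hirr
    refine ⟨Z' ∪ W, hZ'.union hW, subset_union_right, fun hsub => ?_,
      hreg.mono (sdiff_subset_sdiff_right subset_union_left)⟩
    rcases hirr.subset_or_subset_of_subset_union hZ' hW hsub with hYZ' | hYW'
    · exact (hirr.zariskiDenseIn_diff_iff hZ').mp hdense hYZ'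
    · exact hYW hYW'
  obtain ⟨Y₁, Y₂, hY₁, hY₂, hY_eq, hY₁_ne, hY₂_ne⟩ : ∃ Y₁ Y₂, IsAlgSet Y₁ ∧ IsAlgSet Y₂ ∧
      Y = Y₁ ∪ Y₂ ∧ Y ≠ Y₁ ∧ Y ≠ Y₂ := by
    have hne : Y.Nonempty := nonempty_iff_ne_empty.mpr fun hY0 => hYW (hY0 ▸ empty_subset W)
    simpa [IsIrredAlgSet, hY, hne] using hirr
  have hY₁Y : Y₁ ⊂ Y := ssubset_of_subset_of_ne (hY_eq ▸ subset_union_left) hY₁_ne.symm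
  have hY₂Y : Y₂ ⊂ Y := ssubset_of_subset_of_ne (hY_eq ▸ subset_union_right) hY₂_ne.symm
  suffices ∃ Y' W', ∃ hY' : IsAlgSet Y', Y' ⊂ Y ∧ IsAlgSet W' ∧ W ⊆ W' ∧ Y \ W' ⊆ Y' ∧
      ¬ Y' ⊆ W' by
    obtain ⟨Y', W', hY', hY'Y, hW', hWW', hcover, hY'W'⟩ := this
    obtain ⟨B, hB, hW'B, hY'B, hreg⟩ :=
      ih Y' hY' hY'Y (hHR.mono hY'Y.subset) hW' hY'W'
    refine ⟨B, hB, hWW'.trans hW'B, fun hYB => hY'B (hY'Y.subset.trans hYB),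
      hreg.mono fun x hx => ⟨hcover ⟨hx.1, fun hxW' => hx.2 (hW'B hxW')⟩, hx.2⟩⟩
  subst hY_eq
  by_cases hY₁W : Y₁ ⊆ W ∪ Y₂
  · refine ⟨Y₂, W, hY₂, hY₂Y, hW, subset_rfl, fun x hx => ?_, fun hY₂W => hYW ?_⟩
    · rcases hx with ⟨hx₁ | hx₂, hxW⟩
      · exact (hY₁W hx₁).resolve_left hxW
      · exact hx₂
    · exact union_subset (hY₁W.trans (union_subset subset_rfl hY₂W)) hY₂W
  · exact ⟨Y₁, W ∪ Y₂, hY₁, hY₁Y, hW.union hY₂, subset_union_left,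
      fun x hx => hx.1.resolve_right fun hx₂ => hx.2 (Or.inr hx₂), hY₁W⟩

theorem hasRegularFiltration {Y : Set (Fin n → ℝ)} (hY : IsAlgSet Y)
    (hHR : HereditarilyRational Y h) : HasRegularFiltration Y h := by
  induction hY using IsAlgSet.induction with
  | ind Y hY ih => ?_
  rcases Y.eq_empty_or_nonempty with rfl | hne
  · exact hasRegularFiltration_empty
  obtain ⟨B, hB, -, hYB, hreg⟩ :=
    hHR.exists_regularOn_diff hY IsAlgSet.empty fun hY0 => hne.ne_empty (subset_empty_iff.mp hY0)
  have hBY : Y ∩ B ⊂ Y :=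
    ssubset_of_subset_of_ne inter_subset_left fun he => hYB (he ▸ inter_subset_right)
  exact (ih _ (hY.inter hB) hBY (hHR.mono hBY.subset)).extend hY inter_subset_left
    (by rwa [sdiff_self_inter])

end HereditarilyRational

theorem HasRegularFiltration.hereditarilyRational {X : Set (Fin n → ℝ)}
    (hX : HasRegularFiltration X h) : HereditarilyRational X h := by
  obtain ⟨m, F, hF0, hFm, hFalg, hFreg⟩ := hX
  have hF : ∀ i ≤ m + 1, IsAlgSet (F i) ∧ HereditarilyRational (F i) h := by
    intro i hi
    induction i with
    | zero => exact hF0 ▸ ⟨IsAlgSet.empty, hereditarilyRational_empty⟩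
    | succ i ih =>
      obtain ⟨hFi, hHRi⟩ := ih (by omega)
      exact ⟨(hFalg i (by omega)).1, hHRi.of_regularOn_diff hFi (hFreg i (by omega))⟩
  exact hFm ▸ (hF (m + 1) le_rfl).2

end

theorem stmt12_general {n : ℕ} (X : Set (Fin n → ℝ)) (hX : IsAlgSet X)
    (h : (Fin n → ℝ) → ℝ) :
    HereditarilyRational X h ↔
      ∃ (m : ℕ) (F : ℕ → Set (Fin n → ℝ)), F 0 = ∅ ∧ F (m + 1) = X ∧
        (∀ i ≤ m, IsAlgSet (F (i + 1)) ∧ F i ⊆ F (i + 1)) ∧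
        ∀ i ≤ m, RegularOn h (F (i + 1) \ F i) :=
  ⟨fun hHR => hHR.hasRegularFiltration hX, HasRegularFiltration.hereditarilyRational⟩

theorem stmt12 {n : ℕ} (X : Set (Fin n → ℝ)) (hX : IsAlgSet X)
    (h : (Fin n → ℝ) → ℝ) (hc : ContinuousOn h X) :
    HereditarilyRational X h ↔
      ∃ (m : ℕ) (F : ℕ → Set (Fin n → ℝ)), F 0 = ∅ ∧ F (m + 1) = X ∧
        (∀ i ≤ m, IsAlgSet (F (i + 1)) ∧ F i ⊆ F (i + 1)) ∧
        ∀ i ≤ m, RegularOn h (F (i + 1) \ F i) :=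
  stmt12_general X hX h
end

section
/- There are no polynomials P, Q ∈ ℝ[x,y] with P ≡ y² and Q ≡ x modulo (x²−y³) such that P/Q is bounded in a neighborhood of the origin in ℝ². Concretely: if P = y² + P₁·(x²−y³) and Q = x + Q₁·(x²−y³) for polynomials P₁, Q₁, then P/Q restricted to the y-axis equals (1−yP₁(0,y))/(−yQ₁(0,y)), which is unbounded as y → 0. -/
open MvPolynomial

lemma slice_eval15 (p : MvPolynomial (Fin 2) ℝ) (s : Fin 2 → Polynomial ℝ) (y : ℝ) :
    (MvPolynomial.aeval s p).eval y = MvPolynomial.eval (fun i => (s i).eval y) p := by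
  induction p using MvPolynomial.induction_on with
  | C a => simp
  | add p q hp hq => simp [hp, hq]
  | mul_X p i hp => simp [hp]

lemma slice_eval15' (p : MvPolynomial (Fin 2) ℝ) (s : Fin 2 → Polynomial ℝ) (y : ℝ)
    (v : Fin 2 → ℝ) (hv : ∀ i, (s i).eval y = v i) :
    (MvPolynomial.aeval s p).eval y = MvPolynomial.eval v p := by
  rw [slice_eval15]; rw [funext hv]

/-- The vertical slice polynomial. -/
lemma slice_exists15 (p : MvPolynomial (Fin 2) ℝ) :
    ∃ g : Polynomial ℝ, ∀ y : ℝ, g.eval y = MvPolynomial.eval ![0, y] p := by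
  refine ⟨MvPolynomial.aeval ![0, Polynomial.X] p, fun y => ?_⟩
  apply slice_eval15'; intro i; fin_cases i <;> simp

/-- The horizontal slice polynomial. -/
lemma slice_exists15h (p : MvPolynomial (Fin 2) ℝ) (y0 : ℝ) :
    ∃ g : Polynomial ℝ, ∀ x : ℝ, g.eval x = MvPolynomial.eval ![x, y0] p := by
  refine ⟨MvPolynomial.aeval ![Polynomial.X, Polynomial.C y0] p, fun x => ?_⟩
  apply slice_eval15'; intro i; fin_cases i <;> simp

/-- A polynomial bound on a compact interval. -/
lemma bound_exists15 (g : Polynomial ℝ) :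
    ∃ B : ℝ, 0 ≤ B ∧ ∀ y ∈ Set.Icc (-1:ℝ) 1, |g.eval y| ≤ B := by
  obtain ⟨M, hM⟩ := (isCompact_Icc (a := (-1:ℝ)) (b := 1)).exists_bound_of_continuousOn
    g.continuous.continuousOn
  exact ⟨max M 0, le_max_right _ _, fun y hy =>
    le_trans (by simpa using hM y hy) (le_max_left _ _)⟩

/-- The denominator slice polynomial is nonzero. -/
lemma den_ne_zero15 (q : Polynomial ℝ) (a : ℝ) :
    Polynomial.X + q * (Polynomial.X^2 - Polynomial.C a) ≠ 0 := by
  intro h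
  have h2 : (Polynomial.X : Polynomial ℝ) = -(q * (Polynomial.X^2 - Polynomial.C a)) :=
    eq_neg_of_add_eq_zero_left h
  by_cases hq : q = 0
  · rw [hq] at h2; simp at h2
  · have hX2 : (Polynomial.X^2 - Polynomial.C a : Polynomial ℝ) ≠ 0 :=
      Polynomial.X_pow_sub_C_ne_zero (by norm_num) _
    have hdeg := congrArg Polynomial.natDegree h2
    rw [Polynomial.natDegree_X, Polynomial.natDegree_neg,
      Polynomial.natDegree_mul hq hX2, Polynomial.natDegree_X_pow_sub_C] at hdeg
    omega


lemma arith_lower15 (a Bp y : ℝ) (hy0 : 0 < y) (hyp : y * (2*(Bp+1)) ≤ 1)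
    (ha : |a| ≤ Bp) : y^2/2 ≤ |y^2 - a*y^3| := by
  have h1 : |y^2| - |a*y^3| ≤ |y^2 - a*y^3| := abs_sub_abs_le_abs_sub _ _
  have h2 : |y^2| = y^2 := abs_of_nonneg (by positivity)
  have h3 : |a*y^3| = |a| * y^3 := by
    rw [abs_mul, abs_of_nonneg (show (0:ℝ) ≤ y^3 by positivity)]
  rw [h2, h3] at h1
  have h4 : |a| * y^3 ≤ y^2/2 := by
    nlinarith [mul_le_mul_of_nonneg_right ha (pow_pos hy0 3).le,
      mul_le_mul_of_nonneg_right hyp (sq_nonneg y), pow_pos hy0 3, abs_nonneg a]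
  linarith

lemma arith_negD15 (C Bq b y : ℝ) (hy0 : 0 < y) (hyq : y * (2*(Bq+1)*(|C|+1)) ≤ 1)
    (hb : |b| ≤ Bq) : |-(b*y^3)| * (|C|+1) < y^2/2 := by
  have h3 : |-(b*y^3)| = |b| * y^3 := by
    rw [abs_neg, abs_mul, abs_of_nonneg (show (0:ℝ) ≤ y^3 by positivity)]
  rw [h3]
  nlinarith [mul_le_mul_of_nonneg_right (mul_le_mul_of_nonneg_right hb (pow_pos hy0 3).le)
      (show (0:ℝ) ≤ |C|+1 by positivity),
    mul_le_mul_of_nonneg_right hyq (sq_nonneg y), pow_pos hy0 3, abs_nonneg C,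
    mul_nonneg (abs_nonneg C) (pow_pos hy0 3).le]

lemma arith_final15 (C N D m : ℝ) (_hm : 0 < m) (hN : m ≤ N) (hDpos : 0 < D)
    (hDsm : D * (|C|+1) < m) (hH : N ≤ C * D) : False := by
  have h1 : C * D ≤ |C| * D := mul_le_mul_of_nonneg_right (le_abs_self C) hDpos.le
  nlinarith

theorem stmt15 : ¬ ∃ (P₁ Q₁ : MvPolynomial (Fin 2) ℝ) (C ε : ℝ), 0 < ε ∧
    ∀ x y : ℝ, x ^ 2 + y ^ 2 < ε ^ 2 →
      eval ![x, y] (X 0 + Q₁ * (X 0 ^ 2 - X 1 ^ 3)) ≠ 0 →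
      |eval ![x, y] (X 1 ^ 2 + P₁ * (X 0 ^ 2 - X 1 ^ 3)) /
        eval ![x, y] (X 0 + Q₁ * (X 0 ^ 2 - X 1 ^ 3))| ≤ C := by
  rintro ⟨P₁, Q₁, C, ε, hε, H⟩
  obtain ⟨gp, egp⟩ := slice_exists15 P₁
  obtain ⟨gq, egq⟩ := slice_exists15 Q₁
  obtain ⟨Bp, hBp0, hBp⟩ := bound_exists15 gp
  obtain ⟨Bq, hBq0, hBq⟩ := bound_exists15 gq
  by_cases hq0 : gq = 0
  · -- Q₁ vanishes identically on the y-axis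
    have hf : ∀ s : ℝ, MvPolynomial.eval ![0, s] Q₁ = 0 := fun s => by
      rw [← egq, hq0]; simp
    obtain ⟨y0, hy0, hy0ε, hy01, hy0p⟩ :
        ∃ y0 : ℝ, 0 < y0 ∧ y0 ≤ ε/2 ∧ y0 ≤ 1 ∧ y0 * (2*(Bp+1)) ≤ 1 := by
      refine ⟨min (ε/2) (min 1 (1/(2*(Bp+1)))), ?_, min_le_left _ _, ?_, ?_⟩
      · exact lt_min (by positivity) (lt_min one_pos (by positivity))
      · exact le_trans (min_le_right _ _) (min_le_left _ _)
      · have h : min (ε/2) (min 1 (1/(2*(Bp+1)))) ≤ 1/(2*(Bp+1)) :=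
          le_trans (min_le_right _ _) (min_le_right _ _)
        rw [le_div_iff₀ (by positivity)] at h
        exact h
    obtain ⟨n, en⟩ := slice_exists15h P₁ y0
    obtain ⟨q, eq'⟩ := slice_exists15h Q₁ y0
    -- the numerator and denominator slice polynomials
    obtain ⟨NumP, hNum⟩ : ∃ N : Polynomial ℝ, ∀ x : ℝ, N.eval x =
        MvPolynomial.eval ![x, y0] (X 1 ^ 2 + P₁ * (X 0 ^ 2 - X 1 ^ 3)) := by
      refine ⟨Polynomial.C (y0^2) + n * (Polynomial.X^2 - Polynomial.C (y0^3)), fun x => ?_⟩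
      simp [en x]
    obtain ⟨DenP, hDen, hDPne⟩ : ∃ D : Polynomial ℝ, (∀ x : ℝ, D.eval x =
        MvPolynomial.eval ![x, y0] (X 0 + Q₁ * (X 0 ^ 2 - X 1 ^ 3))) ∧ D ≠ 0 := by
      refine ⟨Polynomial.X + q * (Polynomial.X^2 - Polynomial.C (y0^3)), fun x => ?_,
        den_ne_zero15 q (y0^3)⟩
      simp [eq' x]
    have hD0 : DenP.eval 0 = 0 := by
      rw [hDen 0]
      simp [hf y0]
    have hN0val : NumP.eval 0 = y0^2 - gp.eval y0 * y0^3 := by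
      have e1 : (eval ![(0:ℝ), y0]) (X 1 ^ 2 + P₁ * (X 0 ^ 2 - X 1 ^ 3)) =
          y0^2 + (eval ![(0:ℝ), y0]) P₁ * ((0:ℝ)^2 - y0^3) := by simp
      rw [hNum 0, e1, ← egp y0]
      ring
    have hgpb : |gp.eval y0| ≤ Bp := hBp y0 ⟨by linarith, hy01⟩
    have hN0 : y0^2/2 ≤ |NumP.eval 0| := by
      rw [hN0val]
      exact arith_lower15 _ _ _ hy0 hy0p hgpb
    -- continuity
    have hFcont : ContinuousAt (fun x => |NumP.eval x - NumP.eval 0| + |DenP.eval x|) 0 := by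
      apply ContinuousAt.add
      · exact ((NumP.continuous.sub continuous_const).abs).continuousAt
      · exact (DenP.continuous.abs).continuousAt
    obtain ⟨t, ht, ht1, ht2⟩ :
        ∃ t : ℝ, 0 < t ∧ t ≤ y0^2/4 ∧ t ≤ (y0^2/4)/(|C|+1) :=
      ⟨min (y0^2/4) ((y0^2/4)/(|C|+1)), lt_min (by positivity) (by positivity),
        min_le_left _ _, min_le_right _ _⟩
    obtain ⟨η, hη, hηF⟩ := Metric.continuousAt_iff.mp hFcont t ht
    obtain ⟨η', hη', hη'η, hη'ε⟩ : ∃ η' : ℝ, 0 < η' ∧ η' ≤ η ∧ η' ≤ ε/2 :=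
      ⟨min η (ε/2), lt_min hη (by positivity), min_le_left _ _, min_le_right _ _⟩
    obtain ⟨x, hx⟩ := ((Set.Ioo_infinite hη').diff
      (Polynomial.finite_setOf_isRoot hDPne)).nonempty
    obtain ⟨⟨hx0, hxη⟩, hxroot⟩ := hx
    have hxε : x < ε/2 := lt_of_lt_of_le hxη hη'ε
    have hDne : DenP.eval x ≠ 0 := hxroot
    have hball : x^2 + y0^2 < ε^2 := by nlinarith
    have hH := H x y0 hball (by rw [← hDen x]; exact hDne)
    rw [← hNum x, ← hDen x] at hH
    have hFx : |NumP.eval x - NumP.eval 0| + |DenP.eval x| < t := by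
      have hd : dist x 0 < η := by
        rw [Real.dist_eq, sub_zero, abs_of_pos hx0]
        exact lt_of_lt_of_le hxη hη'η
      have h := hηF hd
      rw [Real.dist_eq] at h
      have h0 : |NumP.eval 0 - NumP.eval 0| + |DenP.eval 0| = 0 := by simp [hD0]
      simp only [h0] at h
      rw [sub_zero] at h
      exact lt_of_le_of_lt (le_abs_self _) h
    have hdiff : |NumP.eval x - NumP.eval 0| < t := by
      have h0 : 0 ≤ |DenP.eval x| := abs_nonneg _
      linarith
    have hDsmall : |DenP.eval x| < t := by
      have h0 : 0 ≤ |NumP.eval x - NumP.eval 0| := abs_nonneg _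
      linarith
    have hNx : y0^2/4 ≤ |NumP.eval x| := by
      have h1 : |NumP.eval 0| - |NumP.eval x| ≤ |NumP.eval 0 - NumP.eval x| :=
        abs_sub_abs_le_abs_sub _ _
      rw [abs_sub_comm] at h1
      linarith
    rw [abs_div] at hH
    have hDpos : 0 < |DenP.eval x| := abs_pos.mpr hDne
    rw [div_le_iff₀ hDpos] at hH
    have hDsmall2 : |DenP.eval x| * (|C|+1) < y0^2/4 := by
      have h := lt_of_lt_of_le hDsmall ht2
      rw [lt_div_iff₀ (by positivity)] at h
      linarith
    exact arith_final15 C _ _ _ (by positivity) hNx hDpos hDsmall2 hH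
  · -- gq ≠ 0 : work on the y-axis
    obtain ⟨δ, hδ, hδε, hδ1, hδa, hδb⟩ :
        ∃ δ : ℝ, 0 < δ ∧ δ ≤ ε ∧ δ ≤ 1 ∧ δ ≤ 1/(2*(Bp+1)) ∧ δ ≤ 1/(2*(Bq+1)*(|C|+1)) := by
      refine ⟨min ε (min 1 (min (1/(2*(Bp+1))) (1/(2*(Bq+1)*(|C|+1))))), ?_,
        min_le_left _ _, ?_, ?_, ?_⟩
      · exact lt_min hε (lt_min one_pos (lt_min (by positivity) (by positivity)))
      · exact le_trans (min_le_right _ _) (min_le_left _ _)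
      · exact le_trans (min_le_right _ _) (le_trans (min_le_right _ _) (min_le_left _ _))
      · exact le_trans (min_le_right _ _) (le_trans (min_le_right _ _) (min_le_right _ _))
    obtain ⟨y, hy⟩ := ((Set.Ioo_infinite hδ).diff
      (Polynomial.finite_setOf_isRoot hq0)).nonempty
    obtain ⟨⟨hy0, hyδ⟩, hyroot⟩ := hy
    have hgqy : gq.eval y ≠ 0 := hyroot
    have hyε : y < ε := lt_of_lt_of_le hyδ hδε
    have hy1 : y ≤ 1 := le_of_lt (lt_of_lt_of_le hyδ hδ1)
    have hyp : y * (2*(Bp+1)) ≤ 1 := by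
      have h := le_of_lt (lt_of_lt_of_le hyδ hδa)
      rw [le_div_iff₀ (by positivity)] at h
      exact h
    have hyq : y * (2*(Bq+1)*(|C|+1)) ≤ 1 := by
      have h := le_of_lt (lt_of_lt_of_le hyδ hδb)
      rw [le_div_iff₀ (by positivity)] at h
      exact h
    have hgpb : |gp.eval y| ≤ Bp := hBp y ⟨by linarith, hy1⟩
    have hgqb : |gq.eval y| ≤ Bq := hBq y ⟨by linarith, hy1⟩
    have hnum : MvPolynomial.eval ![(0:ℝ), y] (X 1 ^ 2 + P₁ * (X 0 ^ 2 - X 1 ^ 3)) =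
        y^2 - gp.eval y * y^3 := by
      have e1 : (eval ![(0:ℝ), y]) (X 1 ^ 2 + P₁ * (X 0 ^ 2 - X 1 ^ 3)) =
          y^2 + (eval ![(0:ℝ), y]) P₁ * ((0:ℝ)^2 - y^3) := by simp
      rw [e1, ← egp y]
      ring
    have hden : MvPolynomial.eval ![(0:ℝ), y] (X 0 + Q₁ * (X 0 ^ 2 - X 1 ^ 3)) =
        -(gq.eval y * y^3) := by
      have e1 : (eval ![(0:ℝ), y]) (X 0 + Q₁ * (X 0 ^ 2 - X 1 ^ 3)) =
          0 + (eval ![(0:ℝ), y]) Q₁ * ((0:ℝ)^2 - y^3) := by simp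
      rw [e1, ← egq y]
      ring
    have hDne : -(gq.eval y * y^3) ≠ 0 := by
      simp only [neg_ne_zero]
      exact mul_ne_zero hgqy (by positivity)
    have hball : (0:ℝ)^2 + y^2 < ε^2 := by nlinarith
    have hH := H 0 y hball (by rw [hden]; exact hDne)
    rw [hnum, hden] at hH
    rw [abs_div] at hH
    have hDpos : 0 < |-(gq.eval y * y^3)| := abs_pos.mpr hDne
    rw [div_le_iff₀ hDpos] at hH
    have hNlow : y^2/2 ≤ |y^2 - gp.eval y * y^3| :=
      arith_lower15 _ _ _ hy0 hyp hgpb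
    have hDsm : |-(gq.eval y * y^3)| * (|C|+1) < y^2/2 :=
      arith_negD15 C Bq _ y hy0 hyq hgqb
    exact arith_final15 C _ _ _ (by positivity) hNlow hDpos hDsm hH
end

section
/- The function F₄(x,y) = (y²x)/(x²+(x²−y³)²) · x⁴/(x⁴+(x²−y³)²) satisfies |F₄(x,y)| ≤ C·|x|^{1/3} for all (x,y) ∈ ℝ², for some constant C; in particular F₄ extends continuously to ℝ² (with value 0 where x = 0) and restricts to y²/x on the cuspidal cubic {x² = y³} away from the origin. -/
/-!
Substituting `x = u³`, `y = u²v` turns `F₄` into `u v² / ((1 + u⁶(1 - v³)²)(1 + (1 - v³)²))`,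
which is at most `|u| · v² / (1 + (1 - v³)²) ≤ 4 |u|` in absolute value. Since `|F₄ x y|`
only depends on `|x|`, taking `u = |x|^{1/3}` gives `|F₄ x y| ≤ 4 |x|^{1/3}`; this bound
forces continuity at the origin, and elsewhere both denominators are positive.
-/

open Filter Topology

noncomputable def F₄ (x y : ℝ) : ℝ :=
  y ^ 2 * x / (x ^ 2 + (x ^ 2 - y ^ 3) ^ 2) * (x ^ 4 / (x ^ 4 + (x ^ 2 - y ^ 3) ^ 2))

lemma sq_le_four_mul_one_add_sq_one_sub_pow_three (v : ℝ) : v ^ 2 ≤ 4 * (1 + (1 - v ^ 3) ^ 2) := by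
  nlinarith [sq_nonneg (v - 1), sq_nonneg (v ^ 2 - 1), sq_nonneg (v ^ 3 - 1),
    sq_nonneg (v ^ 3 - 2), sq_nonneg (v ^ 2 - v)]

@[simp]
lemma F₄_zero_left (y : ℝ) : F₄ 0 y = 0 := by
  simp [F₄]

lemma F₄_neg_left (x y : ℝ) : F₄ (-x) y = -F₄ x y := by
  simp only [F₄]
  ring

lemma abs_F₄_abs_left (x y : ℝ) : |F₄ |x| y| = |F₄ x y| := by
  rcases abs_choice x with h | h <;> simp only [h, F₄_neg_left, abs_neg]

lemma F₄_cube_mul {u : ℝ} (hu : u ≠ 0) (v : ℝ) :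
    F₄ (u ^ 3) (u ^ 2 * v) = u * v ^ 2 / ((1 + u ^ 6 * (1 - v ^ 3) ^ 2) * (1 + (1 - v ^ 3) ^ 2)) := by
  simp only [F₄]
  field_simp

lemma abs_F₄_cube_mul_le (u v : ℝ) : |F₄ (u ^ 3) (u ^ 2 * v)| ≤ 4 * |u| := by
  rcases eq_or_ne u 0 with rfl | hu
  · simp
  set w := 1 - v ^ 3
  have hden : 0 < (1 + u ^ 6 * w ^ 2) * (1 + w ^ 2) := by positivity
  rw [F₄_cube_mul hu, abs_div, abs_mul u, abs_of_nonneg (sq_nonneg v), abs_of_pos hden]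
  calc |u| * v ^ 2 / ((1 + u ^ 6 * w ^ 2) * (1 + w ^ 2))
      ≤ |u| * v ^ 2 / (1 + w ^ 2) := by
        rw [mul_comm (1 + u ^ 6 * w ^ 2)]
        gcongr
        exact le_mul_of_one_le_right (by positivity) (le_add_of_nonneg_right (by positivity))
    _ ≤ 4 * |u| := by
        rw [div_le_iff₀ (by positivity)]
        nlinarith [sq_le_four_mul_one_add_sq_one_sub_pow_three v, abs_nonneg u]

lemma abs_F₄_le (x y : ℝ) : |F₄ x y| ≤ 4 * |x| ^ ((1 : ℝ) / 3) := by
  rcases eq_or_ne x 0 with rfl | hx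
  · simp
  set u := |x| ^ ((1 : ℝ) / 3)
  have hu : 0 < u := by positivity
  have hu3 : u ^ 3 = |x| := by
    simpa [u] using Real.rpow_inv_natCast_pow (abs_nonneg x) (n := 3) (by norm_num)
  calc |F₄ x y| = |F₄ (u ^ 3) (u ^ 2 * (y / u ^ 2))| := by
        rw [hu3, mul_div_cancel₀ y (by positivity), abs_F₄_abs_left]
    _ ≤ 4 * |u| := abs_F₄_cube_mul_le u _
    _ = 4 * u := by rw [abs_of_pos hu]

lemma tendsto_F₄_zero : Tendsto (fun p : ℝ × ℝ => F₄ p.1 p.2) (𝓝 0) (𝓝 0) := by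
  have hbound : Tendsto (fun p : ℝ × ℝ => 4 * |p.1| ^ ((1 : ℝ) / 3)) (𝓝 0) (𝓝 0) := by
    have : Continuous (fun p : ℝ × ℝ => 4 * |p.1| ^ ((1 : ℝ) / 3)) :=
      continuous_const.mul (continuous_fst.abs.rpow_const fun _ => Or.inr (by norm_num))
    simpa using this.tendsto 0
  exact squeeze_zero_norm (fun p => abs_F₄_le p.1 p.2) hbound

lemma add_sq_sub_pow_three_pos {n : ℕ} (hn : Even n) (hn0 : n ≠ 0) {x y : ℝ} (h : (x, y) ≠ 0) :
    0 < x ^ n + (x ^ 2 - y ^ 3) ^ 2 := by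
  rcases eq_or_ne x 0 with rfl | hx
  · have hy : y ≠ 0 := fun hy => h (by simp [hy])
    rw [zero_pow hn0, zero_pow two_ne_zero, zero_add, zero_sub, neg_sq]
    positivity
  · have := hn.pow_pos hx (R := ℝ)
    positivity

lemma continuous_F₄ : Continuous (fun p : ℝ × ℝ => F₄ p.1 p.2) := by
  refine continuous_iff_continuousAt.2 fun p => ?_
  rcases eq_or_ne p 0 with rfl | hp
  · simpa [ContinuousAt] using tendsto_F₄_zero
  · exact (((continuous_snd.pow 2).mul continuous_fst).continuousAt.div (by fun_prop)
      (add_sq_sub_pow_three_pos even_two two_ne_zero hp).ne').mul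
      ((continuous_fst.pow 4).continuousAt.div (by fun_prop)
      (add_sq_sub_pow_three_pos (by decide) four_ne_zero hp).ne')

lemma F₄_of_sq_eq_pow_three {x y : ℝ} (h : x ^ 2 = y ^ 3) (hx : x ≠ 0) : F₄ x y = y ^ 2 / x := by
  have hz : x ^ 2 - y ^ 3 = 0 := sub_eq_zero.2 h
  simp only [F₄, hz]
  field_simp
  ring

theorem stmt16 :
    ∃ C : ℝ,
      (∀ x y : ℝ,
        |y ^ 2 * x / (x ^ 2 + (x ^ 2 - y ^ 3) ^ 2) *
          (x ^ 4 / (x ^ 4 + (x ^ 2 - y ^ 3) ^ 2))| ≤ C * |x| ^ ((1 : ℝ) / 3)) ∧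
      Continuous (fun p : ℝ × ℝ =>
        p.2 ^ 2 * p.1 / (p.1 ^ 2 + (p.1 ^ 2 - p.2 ^ 3) ^ 2) *
          (p.1 ^ 4 / (p.1 ^ 4 + (p.1 ^ 2 - p.2 ^ 3) ^ 2))) ∧
      (∀ y : ℝ,
        y ^ 2 * (0 : ℝ) / ((0 : ℝ) ^ 2 + ((0 : ℝ) ^ 2 - y ^ 3) ^ 2) *
          ((0 : ℝ) ^ 4 / ((0 : ℝ) ^ 4 + ((0 : ℝ) ^ 2 - y ^ 3) ^ 2)) = 0) ∧
      ∀ x y : ℝ, x ^ 2 = y ^ 3 → x ≠ 0 →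
        y ^ 2 * x / (x ^ 2 + (x ^ 2 - y ^ 3) ^ 2) *
          (x ^ 4 / (x ^ 4 + (x ^ 2 - y ^ 3) ^ 2)) = y ^ 2 / x :=
  ⟨4, abs_F₄_le, continuous_F₄, F₄_zero_left, fun _ _ => F₄_of_sq_eq_pow_three⟩
end
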